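/- For every n ≥ 1, the number of ascent sequences of length 2n that avoid both patterns 000 and 100 is at least n!. Consequently, the number of 000-avoiding ascent sequences of length 2n is at least n!, as is the number of 100-avoiding ascent sequences of length 2n. -/

import Mathlib

open Filter Topology

/-- Number of ascents in a sequence (list) of naturals. -/
def asc (s : List ℕ) : ℕ :=
  ((s.zip s.tail).filter (fun p => p.1 < p.2)).length

/-- `s` is an ascent sequence: first entry `0`, and each later entry is at most
one more than the number of ascents of the preceding prefix. -/
def IsAscentSeq (s : List ℕ) : Prop :=
  (0 < s.length → s.getD 0 0 = 0) ∧
  ∀ i, 0 < i → i < s.length → s.getD i 0 ≤ asc (s.take i) + 1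

/-- `s` is a weak ascent sequence: every entry is at most the number of ascents. -/
def IsWeakAscentSeq (s : List ℕ) : Prop :=
  ∀ x ∈ s, x ≤ asc s

/-- `s` contains the pattern `p`: some subsequence of `s` is order-isomorphic
(including equalities) to `p`. -/
def ContainsPattern (s p : List ℕ) : Prop :=
  ∃ idx : Fin p.length → ℕ, StrictMono idx ∧ (∀ a, idx a < s.length) ∧
    ∀ a b : Fin p.length, p.get a < p.get b ↔ s.getD (idx a) 0 < s.getD (idx b) 0

def AvoidsPattern (s p : List ℕ) : Prop := ¬ ContainsPattern s p

/-- A pattern of length `j` is a permutation of `0,…,j-1`. -/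
def IsPattern (p : List ℕ) : Prop := List.Perm p (List.range p.length)

/-- Sum-indecomposable: no proper prefix whose entries are all smaller than
all entries of the complementary suffix. -/
def SumIndecomposable (p : List ℕ) : Prop :=
  ¬ ∃ i, 0 < i ∧ i < p.length ∧ ∀ x ∈ p.take i, ∀ y ∈ p.drop i, x < y

/-- Number of `p`-avoiding ascent sequences of length `k`. -/
noncomputable def ascentAvoidCount (p : List ℕ) (k : ℕ) : ℕ :=
  {s : List ℕ | s.length = k ∧ IsAscentSeq s ∧ AvoidsPattern s p}.ncard

/-- Number of `p`-avoiding weak ascent sequences of length `k`. -/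
noncomputable def weakAvoidCount (p : List ℕ) (k : ℕ) : ℕ :=
  {s : List ℕ | s.length = k ∧ IsWeakAscentSeq s ∧ AvoidsPattern s p}.ncard

def listMax (s : List ℕ) : ℕ := s.foldr max 0
def listMin (s : List ℕ) : ℕ := s.foldr min (listMax s)

/-- Reverse-complement map: `m j = max + min - n (k+1-j)`. -/
def revComp (s : List ℕ) : List ℕ :=
  s.reverse.map (fun x => listMax s + listMin s - x)

/-- Occurrence of pattern 000: three equal entries. -/
def Contains000 (s : List ℕ) : Prop :=
  ∃ a b c, a < b ∧ b < c ∧ c < s.length ∧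
    s.getD a 0 = s.getD b 0 ∧ s.getD b 0 = s.getD c 0

/-- Occurrence of pattern 100: `n i₁ > n i₂ = n i₃`. -/
def Contains100 (s : List ℕ) : Prop :=
  ∃ a b c, a < b ∧ b < c ∧ c < s.length ∧
    s.getD b 0 < s.getD a 0 ∧ s.getD b 0 = s.getD c 0

/-- Occurrence of pattern 110: `n i₁ = n i₂ > n i₃`. -/
def Contains110 (s : List ℕ) : Prop :=
  ∃ a b c, a < b ∧ b < c ∧ c < s.length ∧
    s.getD a 0 = s.getD b 0 ∧ s.getD c 0 < s.getD b 0

/-- Occurrence of pattern 120: `n i₂ > n i₁ > n i₃`. -/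
def Contains120 (s : List ℕ) : Prop :=
  ∃ a b c, a < b ∧ b < c ∧ c < s.length ∧
    s.getD a 0 < s.getD b 0 ∧ s.getD c 0 < s.getD a 0

/-- Occurrence of pattern 201: `n i₁ > n i₃ > n i₂`. -/
def Contains201 (s : List ℕ) : Prop :=
  ∃ a b c, a < b ∧ b < c ∧ c < s.length ∧
    s.getD c 0 < s.getD a 0 ∧ s.getD b 0 < s.getD c 0

/-- Occurrence of pattern 012: `n i₁ < n i₂ < n i₃`. -/
def Contains012 (s : List ℕ) : Prop :=
  ∃ a b c, a < b ∧ b < c ∧ c < s.length ∧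
    s.getD a 0 < s.getD b 0 ∧ s.getD b 0 < s.getD c 0

/-- Occurrence of pattern 011: `n i₁ < n i₂ = n i₃`. -/
def Contains011 (s : List ℕ) : Prop :=
  ∃ a b c, a < b ∧ b < c ∧ c < s.length ∧
    s.getD a 0 < s.getD b 0 ∧ s.getD b 0 = s.getD c 0

/-- Occurrence of pattern 021: `n i₁ < n i₃ < n i₂`. -/
def Contains021 (s : List ℕ) : Prop :=
  ∃ a b c, a < b ∧ b < c ∧ c < s.length ∧
    s.getD a 0 < s.getD c 0 ∧ s.getD c 0 < s.getD b 0

/-- Occurrence of pattern 102: `n i₂ < n i₁ < n i₃`. -/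
def Contains102 (s : List ℕ) : Prop :=
  ∃ a b c, a < b ∧ b < c ∧ c < s.length ∧
    s.getD b 0 < s.getD a 0 ∧ s.getD a 0 < s.getD c 0

/-- The construction `C = 0101⋯01 W̃₁⋯W̃ₖ` from weak ascent sequences. -/
def buildC (k : ℕ) (W : Fin k → List ℕ) : List ℕ :=
  (List.replicate k ([0,1] : List ℕ)).flatten ++
    (List.ofFn (fun h : Fin k =>
      (W h).map (fun x =>
        x + 1 + ∑ j ∈ Finset.univ.filter (fun j => j < h), listMax (W j)))).flatten


/-! For each permutation `σ` of `{0, …, n-1}`, the sequence `0, 1, …, n-1, σ 0, …, σ (n-1)` is an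
ascent sequence, since its prefix already has `n - 1` ascents. Each value occurs exactly twice, and
its first occurrence lies in the increasing prefix, so every earlier entry is strictly smaller: this
rules out both `000` and `100`. Distinct permutations give distinct sequences. -/

lemma asc_cons_cons (x y : ℕ) (l : List ℕ) :
    asc (x :: y :: l) = (if x < y then 1 else 0) + asc (y :: l) := by
  simp only [asc, List.tail_cons, List.zip_cons_cons, List.filter_cons]
  split <;> simp_all [Nat.add_comm]

lemma asc_le_length (l : List ℕ) : asc l ≤ l.length :=
  calc asc l ≤ (l.zip l.tail).length := List.length_filter_le _ _
    _ ≤ l.length := by simp [List.length_zip]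

lemma asc_le_asc_append : ∀ l l' : List ℕ, asc l ≤ asc (l ++ l')
  | [], _ => by simp [asc]
  | [_], _ => by simp [asc]
  | x :: y :: l, l' => by
    have := asc_le_asc_append (y :: l) l'
    rw [List.cons_append] at this
    rw [List.cons_append, List.cons_append, asc_cons_cons, asc_cons_cons]
    omega

lemma asc_eq_length_sub_one_of_isChain : ∀ l : List ℕ, l.IsChain (· < ·) → asc l = l.length - 1
  | [], _ => by simp [asc]
  | [_], _ => by simp [asc]
  | x :: y :: l, h => by
    rw [List.isChain_cons_cons] at h
    rw [asc_cons_cons, if_pos h.1, asc_eq_length_sub_one_of_isChain _ h.2]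
    simp [Nat.add_comm]

lemma asc_range (n : ℕ) : asc (List.range n) = n - 1 := by
  simpa using asc_eq_length_sub_one_of_isChain _ (List.pairwise_lt_range (n := n)).isChain

lemma IsAscentSeq.le_length {s : List ℕ} (hs : IsAscentSeq s) {x : ℕ} (hx : x ∈ s) :
    x ≤ s.length := by
  obtain ⟨i, hi, rfl⟩ := List.getElem_of_mem hx
  rcases Nat.eq_zero_or_pos i with rfl | hpos
  · have := hs.1 hi
    rw [List.getD_eq_getElem _ _ hi] at this
    omega
  · have hle := hs.2 i hpos hi
    have := asc_le_length (s.take i)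
    rw [List.getD_eq_getElem _ _ hi] at hle
    simp only [List.length_take] at this
    omega

lemma finite_setOf_length_eq_forall_le (k m : ℕ) :
    {l : List ℕ | l.length = k ∧ ∀ x ∈ l, x ≤ m}.Finite := by
  refine ((List.finite_length_eq (Fin (m + 1)) k).image (List.map Fin.val)).subset ?_
  rintro l ⟨hk, hm⟩
  refine ⟨l.attach.map fun x => ⟨x.1, Nat.lt_succ_of_le (hm x.1 x.2)⟩, by simp [hk], ?_⟩
  simp

lemma finite_setOf_isAscentSeq (k : ℕ) : {s : List ℕ | s.length = k ∧ IsAscentSeq s}.Finite :=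
  (finite_setOf_length_eq_forall_le k k).subset fun _ ⟨hk, hs⟩ =>
    ⟨hk, fun _ hx => hk ▸ hs.le_length hx⟩

def rangeAppendPerm (n : ℕ) (σ : Equiv.Perm (Fin n)) : List ℕ :=
  List.range n ++ List.ofFn fun i => (σ i : ℕ)

section rangeAppendPerm

variable {n : ℕ} (σ : Equiv.Perm (Fin n))

lemma rangeAppendPerm_length : (rangeAppendPerm n σ).length = 2 * n := by
  simp [rangeAppendPerm, two_mul]

lemma getD_rangeAppendPerm_of_lt {i : ℕ} (h : i < n) : (rangeAppendPerm n σ).getD i 0 = i := by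
  rw [rangeAppendPerm, List.getD_eq_getElem _ _ (by simp; omega),
    List.getElem_append_left (by simpa)]
  simp

lemma getD_rangeAppendPerm_of_le {i : ℕ} (h : n ≤ i) (h' : i < 2 * n) :
    (rangeAppendPerm n σ).getD i 0 = σ ⟨i - n, by omega⟩ := by
  rw [rangeAppendPerm, List.getD_eq_getElem _ _ (by simp; omega),
    List.getElem_append_right (by simpa)]
  simp

lemma getD_rangeAppendPerm_le_min {i : ℕ} (h : i < 2 * n) :
    (rangeAppendPerm n σ).getD i 0 ≤ min i n := by
  rcases lt_or_ge i n with hi | hi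
  · rw [getD_rangeAppendPerm_of_lt σ hi]; omega
  · rw [getD_rangeAppendPerm_of_le σ hi h]
    have := (σ ⟨i - n, by omega⟩).isLt
    omega

lemma isAscentSeq_rangeAppendPerm : IsAscentSeq (rangeAppendPerm n σ) := by
  refine ⟨fun h => getD_rangeAppendPerm_of_lt σ (by simp [rangeAppendPerm_length] at h; omega),
    fun i _ hi => ?_⟩
  rw [rangeAppendPerm_length] at hi
  have hprefix : (rangeAppendPerm n σ).take i = List.range (min i n) ++
      (List.ofFn fun j => (σ j : ℕ)).take (i - n) := by
    simp [rangeAppendPerm, List.take_append, List.take_range]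
  have hasc : min i n - 1 ≤ asc ((rangeAppendPerm n σ).take i) := by
    rw [hprefix, ← asc_range]
    exact asc_le_asc_append _ _
  have := getD_rangeAppendPerm_le_min σ hi
  omega

lemma getD_rangeAppendPerm_lt_of_eq {a b c : ℕ} (hab : a < b) (hbc : b < c) (hc : c < 2 * n)
    (heq : (rangeAppendPerm n σ).getD b 0 = (rangeAppendPerm n σ).getD c 0) :
    (rangeAppendPerm n σ).getD a 0 < (rangeAppendPerm n σ).getD b 0 := by
  rcases lt_or_ge b n with hb | hb
  · rw [getD_rangeAppendPerm_of_lt σ hb, getD_rangeAppendPerm_of_lt σ (hab.trans hb)]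
    exact hab
  · rw [getD_rangeAppendPerm_of_le σ hb (hbc.trans hc),
      getD_rangeAppendPerm_of_le σ (hb.trans hbc.le) hc] at heq
    have := Fin.mk.inj (σ.injective (Fin.val_injective heq))
    omega

lemma not_contains000_rangeAppendPerm : ¬ Contains000 (rangeAppendPerm n σ) := by
  rintro ⟨a, b, c, hab, hbc, hc, hab_eq, hbc_eq⟩
  rw [rangeAppendPerm_length] at hc
  have := getD_rangeAppendPerm_lt_of_eq σ hab hbc hc hbc_eq
  omega

lemma not_contains100_rangeAppendPerm : ¬ Contains100 (rangeAppendPerm n σ) := by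
  rintro ⟨a, b, c, hab, hbc, hc, hba, hbc_eq⟩
  rw [rangeAppendPerm_length] at hc
  have := getD_rangeAppendPerm_lt_of_eq σ hab hbc hc hbc_eq
  omega

end rangeAppendPerm

lemma rangeAppendPerm_injective (n : ℕ) : Function.Injective (rangeAppendPerm n) := by
  intro σ τ h
  have hval := List.ofFn_injective (List.append_cancel_left h)
  exact Equiv.ext fun i => Fin.ext (congrFun hval i)

lemma factorial_le_ncard_of_rangeAppendPerm_mem {n : ℕ} {S : Set (List ℕ)} (hS : S.Finite)
    (hmem : ∀ σ, rangeAppendPerm n σ ∈ S) : n.factorial ≤ S.ncard :=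
  calc n.factorial = (Set.range (rangeAppendPerm n)).ncard := by
        rw [Set.ncard_range_of_injective (rangeAppendPerm_injective n), Nat.card_perm,
          Nat.card_fin]
    _ ≤ S.ncard := Set.ncard_le_ncard (Set.range_subset_iff.2 hmem) hS

theorem stmt7_general (n : ℕ) :
    Nat.factorial n ≤ {s : List ℕ | s.length = 2 * n ∧ IsAscentSeq s ∧
            ¬ Contains000 s ∧ ¬ Contains100 s}.ncard ∧
    Nat.factorial n ≤ {s : List ℕ | s.length = 2 * n ∧ IsAscentSeq s ∧ ¬ Contains000 s}.ncard ∧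
    Nat.factorial n ≤ {s : List ℕ | s.length = 2 * n ∧ IsAscentSeq s ∧ ¬ Contains100 s}.ncard := by
  have hfin := finite_setOf_isAscentSeq (2 * n)
  refine ⟨?_, ?_, ?_⟩ <;>
    refine factorial_le_ncard_of_rangeAppendPerm_mem (hfin.subset fun s hs => ⟨hs.1, hs.2.1⟩)
      fun σ => ?_
  · exact ⟨rangeAppendPerm_length σ, isAscentSeq_rangeAppendPerm σ,
      not_contains000_rangeAppendPerm σ, not_contains100_rangeAppendPerm σ⟩
  · exact ⟨rangeAppendPerm_length σ, isAscentSeq_rangeAppendPerm σ,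
      not_contains000_rangeAppendPerm σ⟩
  · exact ⟨rangeAppendPerm_length σ, isAscentSeq_rangeAppendPerm σ,
      not_contains100_rangeAppendPerm σ⟩

/-- At least `n!` ascent sequences of length `2n` avoid both 000 and 100;
hence at least `n!` avoid 000 and at least `n!` avoid 100. -/
theorem stmt7 (n : ℕ) (hn : 1 ≤ n) :
    Nat.factorial n ≤ {s : List ℕ | s.length = 2 * n ∧ IsAscentSeq s ∧
            ¬ Contains000 s ∧ ¬ Contains100 s}.ncard ∧
    Nat.factorial n ≤ {s : List ℕ | s.length = 2 * n ∧ IsAscentSeq s ∧ ¬ Contains000 s}.ncard ∧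
    Nat.factorial n ≤ {s : List ℕ | s.length = 2 * n ∧ IsAscentSeq s ∧ ¬ Contains100 s}.ncard :=
  stmt7_general n
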